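/- Let B₁, B₂ be symmetric positive-definite d×d real matrices with B₁ = (I - 2γA_x)ᵀ(I - 2A_v) and B₂ = I - 2A_v for matrices A_x, A_v. Define μ(x,v) ∝ exp(-xᵀB₁x/2 - vᵀB₂v/2) on ℝ^{2d}, and the drift b(x,v) = (β/2)·(-v, (I - 2γA_x)x + γB₂v) minus the diffusion correction, i.e., the vector field F(x,v) = (β/2)·((−v), (I − 2γA_x)x + γB₂v) + (β/2)·(0, γ·∇_v log μ). Then the pointwise inner product ⟨∇μ(x,v), ((β/2)(-v), (β/2)(I-2γA_x)x)⟩ = 0 for all (x,v), i.e., the Hamiltonian part of the drift is orthogonal to ∇μ. -/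

import Mathlib

/-!
Write `μ = Z exp (-Q/2)` with `Q(x, v) = xᵀB₁x + vᵀB₂v` and `C = I - 2γA_x`. Since `B₁` and `B₂`
are symmetric, the derivative of `Q` along `(-v, Cx)` is `2(-xᵀB₁v + vᵀB₂Cx)`, and
`B₁ = CᵀB₂` turns `xᵀB₁v` into `(Cx)ᵀB₂v = vᵀB₂Cx`: the Hamiltonian field is tangent to the
level sets of `Q`, hence of `μ`.
-/

open Matrix

section QuadraticForm

variable {n : Type*} [Fintype n]

theorem Matrix.IsSymm.dotProduct_mulVec_comm {M : Matrix n n ℝ} (hM : M.IsSymm) (x y : n → ℝ) :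
    x ⬝ᵥ M *ᵥ y = y ⬝ᵥ M *ᵥ x := by
  rw [dotProduct_mulVec, ← mulVec_transpose, hM.eq, dotProduct_comm]

theorem Matrix.IsSymm.hasFDerivAt_dotProduct_mulVec_self [DecidableEq n] {M : Matrix n n ℝ}
    (hM : M.IsSymm) (x : n → ℝ) :
    HasFDerivAt (fun u => u ⬝ᵥ M *ᵥ u)
      ((2 : ℝ) • (toLinearMap₂' ℝ M : (n → ℝ) →ₗ[ℝ] (n → ℝ) →ₗ[ℝ] ℝ).toContinuousBilinearMap x) x := by
  set B := (toLinearMap₂' ℝ M : (n → ℝ) →ₗ[ℝ] (n → ℝ) →ₗ[ℝ] ℝ).toContinuousBilinearMap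
  have hB : ∀ u v, B u v = u ⬝ᵥ M *ᵥ v := toLinearMap₂'_apply' M
  refine ((B.hasFDerivAt_of_bilinear (hasFDerivAt_id x) (hasFDerivAt_id x)).congr_fderiv ?_
    ).congr_of_eventuallyEq (.of_forall fun u => (hB u u).symm)
  ext h
  simp [hB, hM.dotProduct_mulVec_comm h x, two_smul]

/-- `μ ∝ exp (-blockQuadForm B₁ B₂ / 2)`. -/
noncomputable def blockQuadForm (B₁ B₂ : Matrix n n ℝ) (p : (n → ℝ) × (n → ℝ)) : ℝ :=
  p.1 ⬝ᵥ B₁ *ᵥ p.1 + p.2 ⬝ᵥ B₂ *ᵥ p.2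

theorem hasFDerivAt_blockQuadForm [DecidableEq n] {B₁ B₂ : Matrix n n ℝ} (hB₁ : B₁.IsSymm)
    (hB₂ : B₂.IsSymm) (p : (n → ℝ) × (n → ℝ)) :
    HasFDerivAt (blockQuadForm B₁ B₂)
      ((2 : ℝ) • (((toLinearMap₂' ℝ B₁ : (n → ℝ) →ₗ[ℝ] (n → ℝ) →ₗ[ℝ] ℝ).toContinuousBilinearMap
          p.1).comp (.fst ℝ _ _) +
        ((toLinearMap₂' ℝ B₂ : (n → ℝ) →ₗ[ℝ] (n → ℝ) →ₗ[ℝ] ℝ).toContinuousBilinearMap p.2).comp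
          (.snd ℝ _ _))) p := by
  have h₁ := (hB₁.hasFDerivAt_dotProduct_mulVec_self p.1).comp p hasFDerivAt_fst
  have h₂ := (hB₂.hasFDerivAt_dotProduct_mulVec_self p.2).comp p hasFDerivAt_snd
  rw [smul_add]
  exact h₁.add h₂

theorem fderiv_blockQuadForm_apply [DecidableEq n] {B₁ B₂ : Matrix n n ℝ} (hB₁ : B₁.IsSymm)
    (hB₂ : B₂.IsSymm) (p w : (n → ℝ) × (n → ℝ)) :
    fderiv ℝ (blockQuadForm B₁ B₂) p w = 2 * (p.1 ⬝ᵥ B₁ *ᵥ w.1 + p.2 ⬝ᵥ B₂ *ᵥ w.2) := by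
  simp [(hasFDerivAt_blockQuadForm hB₁ hB₂ p).fderiv, toLinearMap₂'_apply', mul_add]

theorem dotProduct_transpose_mul_mulVec {B : Matrix n n ℝ} (hB : B.IsSymm) (C : Matrix n n ℝ)
    (x v : n → ℝ) : x ⬝ᵥ (Cᵀ * B) *ᵥ v = v ⬝ᵥ B *ᵥ (C *ᵥ x) := by
  rw [← mulVec_mulVec, dotProduct_mulVec, vecMul_transpose, hB.dotProduct_mulVec_comm]

theorem fderiv_const_mul_exp_const_mul_apply_eq_zero {E : Type*} [NormedAddCommGroup E]
    [NormedSpace ℝ E] {f : E → ℝ} {p w : E} (hf : DifferentiableAt ℝ f p)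
    (hw : fderiv ℝ f p w = 0) (Z c : ℝ) :
    fderiv ℝ (fun q => Z * Real.exp (c * f q)) p w = 0 := by
  rw [fderiv_const_mul (hf.const_mul c).exp, fderiv_exp (hf.const_mul c), fderiv_const_mul hf]
  simp [hw]

end QuadraticForm

theorem hamiltonian_orthogonal_grad_general {d : ℕ} (β γ : ℝ)
    (Ax Av B₁ B₂ : Matrix (Fin d) (Fin d) ℝ)
    (hB₁ : B₁ = (1 - (2 * γ) • Ax)ᵀ * (1 - (2 : ℝ) • Av))
    (hB₂ : B₂ = 1 - (2 : ℝ) • Av)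
    (hB₁pd : B₁.PosDef) (hB₂pd : B₂.PosDef)
    (Z : ℝ)
    (μ : (Fin d → ℝ) × (Fin d → ℝ) → ℝ)
    (hμ : μ = fun p => Z * Real.exp (-(p.1 ⬝ᵥ B₁.mulVec p.1) / 2
        - (p.2 ⬝ᵥ B₂.mulVec p.2) / 2)) :
    ∀ x v : Fin d → ℝ,
      fderiv ℝ μ (x, v) ((β / 2) • (-v), (β / 2) • ((1 - (2 * γ) • Ax).mulVec x)) = 0 := by
  intro x v
  have hsymm₁ : B₁.IsSymm := isHermitian_iff_isSymm.1 hB₁pd.isHermitian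
  have hsymm₂ : B₂.IsSymm := isHermitian_iff_isSymm.1 hB₂pd.isHermitian
  have hμ' : μ = fun p => Z * Real.exp (-2⁻¹ * blockQuadForm B₁ B₂ p) := by
    rw [hμ]; funext p; unfold blockQuadForm; ring_nf
  rw [hμ']
  refine fderiv_const_mul_exp_const_mul_apply_eq_zero
    (hasFDerivAt_blockQuadForm hsymm₁ hsymm₂ (x, v)).differentiableAt ?_ Z _
  rw [fderiv_blockQuadForm_apply hsymm₁ hsymm₂, hB₁, ← hB₂, dotProduct_transpose_mul_mulVec hsymm₂]
  simp [mulVec_smul]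

/-- The Hamiltonian part of the kinetic Langevin drift is orthogonal to `∇μ`,
where `μ(x,v) ∝ exp(-xᵀB₁x/2 - vᵀB₂v/2)`, `B₁ = (I-2γA_x)ᵀ(I-2A_v)`, `B₂ = I-2A_v`:
the directional derivative of `μ` along `((β/2)(-v), (β/2)(I-2γA_x)x)` vanishes. -/
theorem hamiltonian_orthogonal_grad {d : ℕ} (β γ : ℝ) (hβ : 0 < β) (hγ : 0 < γ)
    (Ax Av B₁ B₂ : Matrix (Fin d) (Fin d) ℝ)
    (hB₁ : B₁ = (1 - (2 * γ) • Ax)ᵀ * (1 - (2 : ℝ) • Av))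
    (hB₂ : B₂ = 1 - (2 : ℝ) • Av)
    (hB₁pd : B₁.PosDef) (hB₂pd : B₂.PosDef)
    (Z : ℝ) (hZ : 0 < Z)
    (μ : (Fin d → ℝ) × (Fin d → ℝ) → ℝ)
    (hμ : μ = fun p => Z * Real.exp (-(p.1 ⬝ᵥ B₁.mulVec p.1) / 2
        - (p.2 ⬝ᵥ B₂.mulVec p.2) / 2)) :
    ∀ x v : Fin d → ℝ,
      fderiv ℝ μ (x, v) ((β / 2) • (-v), (β / 2) • ((1 - (2 * γ) • Ax).mulVec x)) = 0 :=
  hamiltonian_orthogonal_grad_general β γ Ax Av B₁ B₂ hB₁ hB₂ hB₁pd hB₂pd Z μ hμ
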